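/- For every z ≥ 1 and every partition p, one has (d_com^{(z)})^2(p) ≥ p in the dominance order, i.e. d_com^{(z)}(d_com^{(z)}(p)) dominates p. -/

import Mathlib

namespace PartStmt

/-- Sorted (nonincreasing) list of parts of a partition, represented as a multiset. -/
def parts (m : Multiset ℕ) : List ℕ := (m.sort (· ≤ ·)).reverse

/-- The `i`-th part (0-indexed), with `0` beyond the length. -/
def part (m : Multiset ℕ) (i : ℕ) : ℕ := (parts m).getD i 0

/-- Partial sum of the `k` largest parts. -/
def psum (m : Multiset ℕ) (k : ℕ) : ℕ := ∑ i ∈ Finset.range k, part m i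

/-- Dominance order: every partial sum of `l` is at most that of `m`. -/
def Dom (l m : Multiset ℕ) : Prop := ∀ k, psum l k ≤ psum m k

/-- Strict dominance. -/
def StrictDom (l m : Multiset ℕ) : Prop := Dom l m ∧ l ≠ m

/-- Componentwise sum of two partitions (sorted part sequences added, zero padding). -/
def psAdd (l m : Multiset ℕ) : Multiset ℕ :=
  ((Multiset.range (Multiset.card l + Multiset.card m)).map
    (fun i => part l i + part m i)).filter (0 < ·)

/-- The transpose (conjugate) partition: the `j`-th column length `#{x ∈ m : x ≥ j+1}`. -/
def transpose (m : Multiset ℕ) : Multiset ℕ :=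
  ((Multiset.range m.sum).map
    (fun j => Multiset.card (m.filter (fun x => j + 1 ≤ x)))).filter (0 < ·)

/-- The partition `s(m; z) = (z^a, b)` where `m = a z + b`, `0 ≤ b < z`. -/
def sPart (m z : ℕ) : Multiset ℕ :=
  Multiset.replicate (m / z) z + (if m % z = 0 then 0 else {m % z})

/-- `d_com^{(z)}(p) = Σ_i s(p_i; z)` (componentwise partition sum). -/
def dcom (z : ℕ) (p : Multiset ℕ) : Multiset ℕ :=
  (parts p).foldr (fun x acc => psAdd (sPart x z) acc) 0

/-- A multiset is a partition when all its parts are positive. -/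
def IsPartition (m : Multiset ℕ) : Prop := ∀ x ∈ m, 0 < x


lemma parts_coe (q : Multiset ℕ) : ((parts q : List ℕ) : Multiset ℕ) = q := by
  unfold parts
  rw [Multiset.coe_reverse, Multiset.sort_eq]

lemma parts_sorted (q : Multiset ℕ) : (parts q).Pairwise (· ≥ ·) := by
  unfold parts
  rw [List.pairwise_reverse]
  exact (Multiset.pairwise_sort q (· ≤ ·)).imp (fun h => h)

lemma parts_length (q : Multiset ℕ) : (parts q).length = Multiset.card q := by
  unfold parts
  rw [List.length_reverse, Multiset.length_sort]

lemma part_anti (q : Multiset ℕ) : ∀ {i j : ℕ}, i ≤ j → part q j ≤ part q i := by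
  intro i j hij
  unfold part
  rcases lt_or_ge j (parts q).length with hj | hj
  · rw [List.getD_eq_getElem _ _ hj, List.getD_eq_getElem _ _ (lt_of_le_of_lt hij hj)]
    rcases eq_or_lt_of_le hij with rfl | hlt
    · exact le_refl _
    · exact List.pairwise_iff_getElem.mp (parts_sorted q) i j _ _ hlt
  · rw [List.getD_eq_default _ _ hj]
    exact Nat.zero_le _

lemma part_eq_zero {q : Multiset ℕ} {i : ℕ} (h : Multiset.card q ≤ i) : part q i = 0 := by
  unfold part
  exact List.getD_eq_default _ _ (by rw [parts_length]; exact h)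


lemma getD_all_zero : ∀ (L : List ℕ), (∀ x ∈ L, x = 0) → ∀ i, L.getD i 0 = 0 := by
  intro L hL i
  rcases lt_or_ge i L.length with h | h
  · rw [List.getD_eq_getElem _ _ h]; exact hL _ (List.getElem_mem h)
  · exact List.getD_eq_default _ _ h

lemma getD_filter_pos : ∀ (L : List ℕ), L.Pairwise (· ≥ ·) →
    ∀ i, (L.filter (0 < ·)).getD i 0 = L.getD i 0 := by
  intro L
  induction L with
  | nil => intro _ i; simp
  | cons a L ih =>
    intro hs i
    rcases Nat.eq_zero_or_pos a with rfl | ha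
    · have hall : ∀ x ∈ L, x = 0 := by
        intro x hx
        exact Nat.le_zero.mp (List.rel_of_pairwise_cons hs hx)
      have h1 : ((0 : ℕ) :: L).filter (0 < ·) = [] := by
        rw [List.filter_cons]
        simp only [decide_eq_true_eq, Nat.lt_irrefl, if_false]
        rw [List.filter_eq_nil_iff]
        intro x hx
        simp [hall x hx]
      rw [h1]
      cases i with
      | zero => simp
      | succ i =>
        simp only [List.getD_nil, List.getD_cons_succ]
        exact (getD_all_zero L hall i).symm
    · have h1 : (a :: L).filter (0 < ·) = a :: L.filter (0 < ·) := by
        rw [List.filter_cons]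
        simp [ha]
      rw [h1]
      cases i with
      | zero => simp
      | succ i =>
        simp only [List.getD_cons_succ]
        exact ih hs.of_cons i

lemma parts_of_anti {N : ℕ} {f : ℕ → ℕ} (hf : ∀ i j, i ≤ j → f j ≤ f i)
    (hN : ∀ i, N ≤ i → f i = 0) :
    ∀ i, part (((Multiset.range N).map f).filter (0 < ·)) i = f i := by
  intro i
  have hML : ((Multiset.range N).map f).filter (0 < ·)
      = (((List.range N).map f).filter (fun x => decide (0 < x)) : List ℕ) := by
    rw [Multiset.range]
    rfl
  set L : List ℕ := ((List.range N).map f).filter (fun x => decide (0 < x)) with hLdef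
  have hMsorted : (((List.range N).map f)).Pairwise (· ≥ ·) := by
    rw [List.pairwise_map]
    rw [List.pairwise_iff_getElem]
    intro a b ha hb hab
    simp only [List.getElem_range] at *
    exact hf a b (le_of_lt hab)
  have hLsorted : L.Pairwise (· ≥ ·) := hMsorted.filter _
  -- parts of ↑L is L itself
  have hparts : parts (L : Multiset ℕ) = L := by
    unfold parts
    have h1 : Multiset.sort (L : Multiset ℕ) (· ≤ ·) = L.reverse := by
      refine (fun h s1 s2 => List.Perm.eq_of_pairwise' (r := (· ≤ ·)) s1 s2 h) ?_ ?_ ?_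
      · exact (Multiset.coe_eq_coe.mp (Multiset.sort_eq (L : Multiset ℕ) (· ≤ ·))).trans
          (List.reverse_perm L).symm
      · exact Multiset.pairwise_sort _ _
      · rw [List.pairwise_reverse]
        exact hLsorted.imp (fun h => h)
    rw [h1, List.reverse_reverse]
  rw [hML]
  unfold part
  rw [hparts]
  have h2 : L.getD i 0 = ((List.range N).map f).getD i 0 :=
    getD_filter_pos _ hMsorted i
  rw [h2]
  rcases lt_or_ge i N with h | h
  · rw [List.getD_eq_getElem _ _ (by simpa using h)]
    simp
  · rw [List.getD_eq_default _ _ (by simpa using h), hN i h]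


lemma part_zero (i : ℕ) : part (0 : Multiset ℕ) i = 0 :=
  part_eq_zero (by simp)

lemma part_psAdd (l m : Multiset ℕ) (i : ℕ) :
    part (psAdd l m) i = part l i + part m i := by
  unfold psAdd
  exact parts_of_anti
    (fun a b hab => Nat.add_le_add (part_anti l hab) (part_anti m hab))
    (fun a ha => by
      rw [part_eq_zero (le_trans (Nat.le_add_right _ _) ha),
        part_eq_zero (le_trans (Nat.le_add_left _ _) ha)]) i

lemma psum_psAdd (l m : Multiset ℕ) (k : ℕ) :
    psum (psAdd l m) k = psum l k + psum m k := by
  unfold psum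
  rw [← Finset.sum_add_distrib]
  exact Finset.sum_congr rfl (fun i _ => part_psAdd l m i)

lemma sPart_zero (z : ℕ) : sPart 0 z = 0 := by
  unfold sPart
  simp

lemma parts_sPart (m z : ℕ) (hz : 1 ≤ z) :
    parts (sPart m z) = List.replicate (m / z) z ++ (if m % z = 0 then [] else [m % z]) := by
  set B : List ℕ := if m % z = 0 then [] else [m % z] with hB
  have hcoe : ((B.reverse ++ List.replicate (m / z) z : List ℕ) : Multiset ℕ) = sPart m z := by
    unfold sPart
    rcases Nat.eq_zero_or_pos (m % z) with h | h
    · simp [hB, h, Multiset.coe_replicate]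
    · simp only [hB, if_neg (Nat.pos_iff_ne_zero.mp h), List.reverse_cons, List.reverse_nil,
        List.nil_append, List.singleton_append, Multiset.cons_coe, Multiset.coe_replicate]
      rw [add_comm]
      rfl
  have hsorted : (B.reverse ++ List.replicate (m / z) z).Pairwise (· ≤ ·) := by
    rw [List.pairwise_append]
    refine ⟨?_, ?_, ?_⟩
    · rcases Nat.eq_zero_or_pos (m % z) with h | h
      · simp [hB, h]
      · simp [hB, Nat.pos_iff_ne_zero.mp h]
    · simp
    · intro a ha b hb
      have ha' : a = m % z := by
        rcases Nat.eq_zero_or_pos (m % z) with h | h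
        · simp [hB, h] at ha
        · simp [hB, Nat.pos_iff_ne_zero.mp h] at ha; exact ha
      have hb' : b = z := List.eq_of_mem_replicate hb
      rw [ha', hb']
      exact le_of_lt (Nat.mod_lt _ hz)
  unfold parts
  have h1 : Multiset.sort (sPart m z) (· ≤ ·) = B.reverse ++ List.replicate (m / z) z := by
    refine (fun h s1 s2 => List.Perm.eq_of_pairwise' (r := (· ≤ ·)) s1 s2 h) ?_ ?_ ?_
    · rw [← hcoe]
      exact Multiset.coe_eq_coe.mp (Multiset.sort_eq _ _)
    · exact Multiset.pairwise_sort _ _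
    · exact hsorted
  rw [h1, List.reverse_append, List.reverse_reverse, List.reverse_replicate]

lemma part_sPart_eq (m z : ℕ) (hz : 1 ≤ z) (k : ℕ) :
    part (sPart m z) k = if k < m / z then z else if k = m / z then m % z else 0 := by
  unfold part
  rw [parts_sPart m z hz]
  rcases lt_trichotomy k (m / z) with h | h | h
  · rw [if_pos h]
    rw [List.getD_append _ _ _ _ (by simpa using h)]
    rw [List.getD_eq_getElem _ _ (by simpa using h)]
    simp
  · have hne : ¬ (k < m / z) := by omega
    rw [if_neg hne, if_pos h]
    rw [List.getD_append_right _ _ _ _ (by simp [h])]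
    simp only [List.length_replicate, h, Nat.sub_self]
    rcases Nat.eq_zero_or_pos (m % z) with h2 | h2
    · simp [h2]
    · simp [Nat.pos_iff_ne_zero.mp h2]
  · have hne : ¬ (k < m / z) := by omega
    have hne2 : ¬ (k = m / z) := by omega
    rw [if_neg hne, if_neg hne2]
    apply List.getD_eq_default
    rw [List.length_append, List.length_replicate]
    have : (if m % z = 0 then ([] : List ℕ) else [m % z]).length ≤ 1 := by
      split <;> simp
    omega

lemma part_sPart_le (m z : ℕ) (hz : 1 ≤ z) (j : ℕ) : part (sPart m z) j ≤ z := by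
  rw [part_sPart_eq m z hz j]
  have := Nat.mod_lt m hz
  split
  · exact le_refl z
  · split
    · omega
    · exact Nat.zero_le z

lemma part_sPart_min (m z : ℕ) (hz : 1 ≤ z) (k : ℕ) :
    min m (k * z) + part (sPart m z) k = min m ((k + 1) * z) := by
  rw [part_sPart_eq m z hz k]
  have hm : m / z * z + m % z = m := Nat.div_add_mod' m z
  have hbz : m % z < z := Nat.mod_lt _ hz
  rcases lt_trichotomy k (m / z) with h | h | h
  · rw [if_pos h]
    have hk1 : (k + 1) * z ≤ (m / z) * z := Nat.mul_le_mul h (le_refl z)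
    have h2 : (k + 1) * z ≤ m := le_trans hk1 (by omega)
    have h1 : k * z ≤ (k + 1) * z := Nat.mul_le_mul (by omega) (le_refl z)
    rw [min_eq_right (le_trans h1 h2), min_eq_right h2]
    ring
  · subst h
    have hexp : (m / z + 1) * z = (m / z) * z + z := by ring
    have h1 : (m / z) * z ≤ m := by omega
    have h2 : m ≤ (m / z + 1) * z := by omega
    rw [if_neg (lt_irrefl _), if_pos rfl, min_eq_right h1, min_eq_left h2]
    omega
  · have hne : ¬ (k < m / z) := by omega
    have hne2 : ¬ (k = m / z) := by omega
    rw [if_neg hne, if_neg hne2]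
    have hk1 : (m / z + 1) * z ≤ k * z := Nat.mul_le_mul h (le_refl z)
    have hexp : (m / z + 1) * z = (m / z) * z + z := by ring
    have h1 : m ≤ k * z := by omega
    have hk2 : k * z ≤ (k + 1) * z := Nat.mul_le_mul (by omega) (le_refl z)
    have h2 : m ≤ (k + 1) * z := le_trans h1 hk2
    rw [min_eq_left h1, min_eq_left h2]
    omega

lemma psum_sPart (m z : ℕ) (hz : 1 ≤ z) (k : ℕ) :
    psum (sPart m z) k = min m (k * z) := by
  induction k with
  | zero => simp [psum]
  | succ k ih =>
    unfold psum at *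
    rw [Finset.sum_range_succ, ih, part_sPart_min m z hz k]


lemma psum_zero (k : ℕ) : psum (0 : Multiset ℕ) k = 0 := by
  unfold psum
  exact Finset.sum_eq_zero (fun i _ => part_zero i)

lemma psum_foldr (z : ℕ) (hz : 1 ≤ z) (k : ℕ) : ∀ L : List ℕ,
    psum (L.foldr (fun x acc => psAdd (sPart x z) acc) 0) k
      = (L.map (fun x => min x (k * z))).sum := by
  intro L
  induction L with
  | nil => simp [psum_zero]
  | cons a L ih =>
    simp only [List.foldr_cons, List.map_cons, List.sum_cons]
    rw [psum_psAdd, ih, psum_sPart a z hz k]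

lemma part_foldr (z j : ℕ) : ∀ L : List ℕ,
    part (L.foldr (fun x acc => psAdd (sPart x z) acc) 0) j
      = (L.map (fun x => part (sPart x z) j)).sum := by
  intro L
  induction L with
  | nil => simp [part_zero]
  | cons a L ih =>
    simp only [List.foldr_cons, List.map_cons, List.sum_cons]
    rw [part_psAdd, ih]

lemma genSum : ∀ (L : List ℕ) (g : ℕ → ℕ) (n : ℕ), g 0 = 0 → L.length ≤ n →
    (L.map g).sum = ∑ i ∈ Finset.range n, g (L.getD i 0) := by
  intro L
  induction L with
  | nil =>
    intro g n hg _
    simp [hg]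
  | cons a L ih =>
    intro g n hg hlen
    cases n with
    | zero => simp at hlen
    | succ n =>
      rw [Finset.sum_range_succ']
      simp only [List.getD_cons_succ, List.getD_cons_zero, List.map_cons, List.sum_cons]
      rw [ih g n hg (by simpa using hlen)]
      omega

lemma part_le_sum (p : Multiset ℕ) (i : ℕ) : part p i ≤ p.sum := by
  unfold part
  rcases lt_or_ge i (parts p).length with h | h
  · rw [List.getD_eq_getElem _ _ h]
    have hmem : (parts p)[i] ∈ parts p := List.getElem_mem h
    have hmem2 : (parts p)[i] ∈ p := by
      have h2 := Multiset.mem_coe.mpr hmem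
      rwa [parts_coe] at h2
    exact Multiset.single_le_sum (fun x _ => Nat.zero_le x) _ hmem2
  · rw [List.getD_eq_default _ _ h]
    exact Nat.zero_le _

theorem stmt7' (z : ℕ) (hz : 1 ≤ z) (p : Multiset ℕ) :
    Dom p (dcom z (dcom z p)) := by
  intro k
  set q := dcom z p with hq
  set N := Multiset.card q + p.sum with hN
  set Mk := max k (parts p).length with hMk
  -- part of q as a sum
  have hpartq : ∀ j, part q j = ∑ i ∈ Finset.range Mk, part (sPart (part p i) z) j := by
    intro j
    rw [hq]
    unfold dcom
    rw [part_foldr]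
    have := genSum (parts p) (fun x => part (sPart x z) j) Mk
      (by simp [sPart_zero, part_zero]) (le_max_right _ _)
    exact this
  -- rewrite the RHS
  have hrhs : psum (dcom z q) k = ∑ j ∈ Finset.range N, min (part q j) (k * z) := by
    unfold dcom
    rw [psum_foldr z hz k]
    have := genSum (parts q) (fun x => min x (k * z)) N (by simp)
      (by rw [parts_length]; omega)
    exact this
  rw [hrhs]
  -- lower bound each term
  have hterm : ∀ j, (∑ i ∈ Finset.range k, part (sPart (part p i) z) j)
      ≤ min (part q j) (k * z) := by
    intro j
    apply le_min
    · rw [hpartq j]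
      apply Finset.sum_le_sum_of_subset
      exact Finset.range_subset_range.mpr (le_max_left _ _)
    · calc ∑ i ∈ Finset.range k, part (sPart (part p i) z) j
          ≤ ∑ _i ∈ Finset.range k, z :=
            Finset.sum_le_sum (fun i _ => part_sPart_le _ z hz j)
        _ = k * z := by simp [mul_comm]
  calc psum p k = ∑ i ∈ Finset.range k, part p i := rfl
    _ = ∑ i ∈ Finset.range k, min (part p i) (N * z) := by
        apply Finset.sum_congr rfl
        intro i _
        rw [min_eq_left]
        calc part p i ≤ p.sum := part_le_sum p i
          _ ≤ N := by omega
          _ ≤ N * z := Nat.le_mul_of_pos_right N hz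
    _ = ∑ i ∈ Finset.range k, psum (sPart (part p i) z) N := by
        apply Finset.sum_congr rfl
        intro i _
        rw [psum_sPart _ z hz]
    _ = ∑ i ∈ Finset.range k, ∑ j ∈ Finset.range N, part (sPart (part p i) z) j := rfl
    _ = ∑ j ∈ Finset.range N, ∑ i ∈ Finset.range k, part (sPart (part p i) z) j :=
        Finset.sum_comm
    _ ≤ ∑ j ∈ Finset.range N, min (part q j) (k * z) :=
        Finset.sum_le_sum (fun j _ => hterm j)


/-- `(d_com^{(z)})²(p) ≥ p` in dominance order. -/
theorem stmt7 (z : ℕ) (hz : 1 ≤ z) (p : Multiset ℕ) (hp : IsPartition p) :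
    Dom p (dcom z (dcom z p)) := stmt7' z hz p

end PartStmt
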